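/- In the game G_{1,2d} with arbitrarily modified initial segment: if the first N-1 values are arbitrary elements of {0,1,2} and x_n = mex{x_{n-1}, x_{⌈n/(2d)⌉}} for n ≥ N, then for all n ≥ 4d²N - 2d + 1 with n ≡ ℓ (mod 4d) for some odd ℓ with 2d+1 ≤ ℓ ≤ 4d-1, one has x_n = 0. -/

import Mathlib

/-
Write `c n = ⌈n / 2d⌉`; then `x n = 0` exactly when `x (n - 1) ≠ 0` and `x (c n) ≠ 0`.
The indices `2dm + 1, …, 2dm + 2d` of a block all have parent `m + 1`: if `x (m + 1) = 0`,
nothing in the block vanishes, and otherwise, provided `x (2dm) ≠ 0`, the block vanishes exactly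
at its odd offsets. Either way `x` does not vanish at the even indices of the block or at
`2d (m + 1)`. Since the rule at `N` forces a zero among `x (N - 1), x N, x (c N)`, an induction
over blocks shows that `x` never vanishes at even indices `≥ 2dN`. Finally, if `n mod 4d` is odd
and exceeds `2d`, both `n - 1` and `c n = 2 ⌊n / 4d⌋ + 2` are even and `≥ 2dN`, so `x n = 0`.
-/

/-- mex of the two-element set {a, b}: the least natural number not in {a, b}. -/
def mex2 (a b : ℕ) : ℕ :=
  if 0 ≠ a ∧ 0 ≠ b then 0 else if 1 ≠ a ∧ 1 ≠ b then 1 else if 2 ≠ a ∧ 2 ≠ b then 2 else 3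

theorem mex2_eq_zero_iff {a b : ℕ} : mex2 a b = 0 ↔ a ≠ 0 ∧ b ≠ 0 := by
  unfold mex2
  split_ifs <;> simp_all <;> omega

theorem mex2_zero_right_ne_zero (a : ℕ) : mex2 a 0 ≠ 0 := by
  simp [mex2_eq_zero_iff]

theorem Nat.add_pred_div_eq_of_le_of_lt {n m k : ℕ} (h₁ : n ≤ m * k) (h₂ : m * k < n + m) :
    (n + (m - 1)) / m = k :=
  Nat.div_eq_of_lt_le (by rw [mul_comm] at h₁ h₂; omega) (by rw [add_mul, mul_comm]; omega)

theorem two_mul_mul_le_of_le_mul {d N n k : ℕ} (hd : 1 ≤ d) (hN : 1 ≤ N)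
    (hn : 4 * d ^ 2 * N - 2 * d + 1 ≤ n) (hle : n ≤ 2 * d * k) :
    2 * d * N ≤ n - 1 ∧ 2 * d * N ≤ k := by
  have hsq : 4 * d ^ 2 * N = 2 * d * (2 * d * N) := by ring
  have hdN : 2 * (2 * d * N) ≤ 2 * d * (2 * d * N) := Nat.mul_le_mul_right _ (by omega)
  have hdN' : 2 * d * 1 ≤ 2 * d * N := Nat.mul_le_mul_left _ hN
  refine ⟨by omega, Nat.le_of_lt_succ (Nat.lt_of_mul_lt_mul_left (a := 2 * d) ?_)⟩
  rw [Nat.mul_succ]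
  omega

/-- The game `G_{1,2d}`, with its rule imposed from index `N` on. -/
def IsMexGame (d N : ℕ) (x : ℕ → ℕ) : Prop :=
  ∀ n, N ≤ n → x n = mex2 (x (n - 1)) (x ((n + (2 * d - 1)) / (2 * d)))

namespace IsMexGame

variable {d N : ℕ} {x : ℕ → ℕ} (hx : IsMexGame d N x)
include hx

theorem eq_mex2_of_le_of_lt {n k : ℕ} (hn : N ≤ n) (h₁ : n ≤ 2 * d * k)
    (h₂ : 2 * d * k < n + 2 * d) : x n = mex2 (x (n - 1)) (x k) := by
  rw [hx n hn, Nat.add_pred_div_eq_of_le_of_lt h₁ h₂]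

theorem block_alternation {m : ℕ} (hm : N ≤ 2 * d * m + 1) (hparent : x (m + 1) ≠ 0)
    (hstart : x (2 * d * m) ≠ 0) : ∀ t ≤ 2 * d, (x (2 * d * m + t) = 0 ↔ Odd t) := by
  intro t ht
  induction t with
  | zero => simpa using hstart
  | succ t ih =>
    have hrec : x (2 * d * m + (t + 1)) = mex2 (x (2 * d * m + t)) (x (m + 1)) :=
      hx.eq_mex2_of_le_of_lt (k := m + 1) (by omega) (by rw [mul_add]; omega)
        (by rw [mul_add]; omega)
    rw [hrec, mex2_eq_zero_iff, Ne, ih (by omega), Nat.odd_add_one]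
    exact and_iff_left hparent

theorem even_block_ne_zero {m t : ℕ} (hm : N ≤ 2 * d * m + 1) (hstart : x (2 * d * m) ≠ 0)
    (ht : t ≤ 2 * d) (heven : Even t) : x (2 * d * m + t) ≠ 0 := by
  by_cases hparent : x (m + 1) = 0
  · rcases Nat.eq_zero_or_pos t with rfl | htpos
    · exact hstart
    · rw [hx.eq_mex2_of_le_of_lt (k := m + 1) (by omega) (by rw [mul_add]; omega)
        (by rw [mul_add]; omega), hparent]
      exact mex2_zero_right_ne_zero _
  · rw [Ne, hx.block_alternation hm hparent hstart t ht, Nat.not_odd_iff_even]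
    exact heven

theorem ne_zero_two_mul_mul (hd : 1 ≤ d) {m₀ : ℕ} (hzero : x m₀ = 0) (hm₀ : N ≤ 2 * d * m₀) :
    ∀ m, m₀ ≤ m → x (2 * d * m) ≠ 0 := by
  intro m hm
  induction m, hm using Nat.le_induction with
  | base =>
    rw [hx.eq_mex2_of_le_of_lt hm₀ le_rfl (by omega), hzero]
    exact mex2_zero_right_ne_zero _
  | succ m hm ih =>
    have hmono : 2 * d * m₀ ≤ 2 * d * m := Nat.mul_le_mul_left _ hm
    rw [mul_add, mul_one]
    exact hx.even_block_ne_zero (by omega) ih le_rfl (even_two_mul d)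

theorem even_ne_zero_of_le (hd : 1 ≤ d) {m₀ : ℕ} (hzero : x m₀ = 0) (hm₀ : N ≤ 2 * d * m₀)
    {n : ℕ} (heven : Even n) (hn : 2 * d * m₀ ≤ n) : x n ≠ 0 := by
  have hq : m₀ ≤ n / (2 * d) := (Nat.le_div_iff_mul_le (by omega)).2 (by rwa [mul_comm])
  have hmono : 2 * d * m₀ ≤ 2 * d * (n / (2 * d)) := Nat.mul_le_mul_left _ hq
  have hdecomp := Nat.div_add_mod n (2 * d)
  have hrem : n % (2 * d) < 2 * d := Nat.mod_lt _ (by omega)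
  have hrem_even : Even (n % (2 * d)) :=
    (Nat.even_add.1 (hdecomp ▸ heven)).1 (even_two_mul d |>.mul_right _)
  rw [← hdecomp]
  exact hx.even_block_ne_zero (by omega) (hx.ne_zero_two_mul_mul hd hzero hm₀ _ hq) hrem.le
    hrem_even

theorem exists_zero (hd : 1 ≤ d) (hN : 2 ≤ N) : ∃ m₀ ≤ N, N ≤ 2 * d * m₀ ∧ x m₀ = 0 := by
  have hpred : 2 * (N - 1) ≤ 2 * d * (N - 1) := Nat.mul_le_mul_right _ (by omega)
  have hsplit : 2 * d * (N - 1) + 2 * d = 2 * d * N := by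
    rw [← Nat.mul_add_one, Nat.sub_one_add_one (by omega)]
  by_cases hxN : x N = 0
  · exact ⟨N, le_rfl, by omega, hxN⟩
  obtain ⟨k, hk⟩ : ∃ k, k = (N + (2 * d - 1)) / (2 * d) := ⟨_, rfl⟩
  have hkN : k ≤ N := hk ▸ Nat.div_le_of_le_mul (by omega)
  have hNk : N ≤ 2 * d * k := by
    have := Nat.div_add_mod (N + (2 * d - 1)) (2 * d)
    have := Nat.mod_lt (N + (2 * d - 1)) (show 0 < 2 * d by omega)
    rw [← hk] at *
    omega
  have hboth : ¬(x (N - 1) ≠ 0 ∧ x k ≠ 0) := by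
    rw [← mex2_eq_zero_iff, hk, ← hx N le_rfl]
    exact hxN
  by_cases hxk : x k = 0
  · exact ⟨k, hkN, hNk, hxk⟩
  · exact ⟨N - 1, by omega, by omega, by tauto⟩

theorem even_ne_zero (hd : 1 ≤ d) (hN : 2 ≤ N) {n : ℕ} (heven : Even n) (hn : 2 * d * N ≤ n) :
    x n ≠ 0 := by
  obtain ⟨m₀, hm₀N, hm₀, hzero⟩ := hx.exists_zero hd hN
  exact hx.even_ne_zero_of_le hd hzero hm₀ heven ((Nat.mul_le_mul_left _ hm₀N).trans hn)

end IsMexGame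

theorem stmt_17_general (d N : ℕ) (hd : 1 ≤ d) (hN : 2 ≤ N) (x : ℕ → ℕ)
    (hrec : ∀ n, N ≤ n → x n = mex2 (x (n - 1)) (x ((n + (2 * d - 1)) / (2 * d)))) :
    ∀ n, 4 * d ^ 2 * N - 2 * d + 1 ≤ n →
      (∃ ℓ, Odd ℓ ∧ 2 * d + 1 ≤ ℓ ∧ ℓ ≤ 4 * d - 1 ∧ n % (4 * d) = ℓ) →
      x n = 0 := by
  intro n hn ⟨ℓ, hodd, hℓ₁, hℓ₂, hℓ⟩
  have hx : IsMexGame d N x := hrec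
  obtain ⟨q, hq⟩ : ∃ q, 4 * d * q + ℓ = n := ⟨n / (4 * d), hℓ ▸ Nat.div_add_mod n (4 * d)⟩
  have hq_even : 4 * d * q = 2 * (2 * d * q) := by ring
  have hblock : 2 * d * (2 * q + 2) = 2 * (2 * d * q) + 4 * d := by ring
  obtain ⟨hpred, hk⟩ := two_mul_mul_le_of_le_mul hd (by omega) hn (k := 2 * q + 2) (by omega)
  have hNn : N ≤ 2 * d * N := Nat.le_mul_of_pos_left N (by omega)
  rw [hx.eq_mex2_of_le_of_lt (k := 2 * q + 2) (by omega) (by omega) (by omega), mex2_eq_zero_iff]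
  have hodd' := Nat.odd_iff.1 hodd
  exact ⟨hx.even_ne_zero hd hN (Nat.even_iff.2 (by omega)) hpred,
    hx.even_ne_zero hd hN (by simp [parity_simps]) hk⟩

theorem stmt_17 (d N : ℕ) (hd : 1 ≤ d) (hN : 2 ≤ N) (x : ℕ → ℕ)
    (hinit : ∀ i, 1 ≤ i → i ≤ N - 1 → x i ∈ ({0, 1, 2} : Set ℕ))
    (hrec : ∀ n, N ≤ n → x n = mex2 (x (n - 1)) (x ((n + (2 * d - 1)) / (2 * d)))) :
    ∀ n, 4 * d ^ 2 * N - 2 * d + 1 ≤ n →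
      (∃ ℓ, Odd ℓ ∧ 2 * d + 1 ≤ ℓ ∧ ℓ ≤ 4 * d - 1 ∧ n % (4 * d) = ℓ) →
      x n = 0 :=
  stmt_17_general d N hd hN x hrec
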